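/- arXiv:1402.2397 — 2 statements merged into one kernel-verified Lean document; each statement's English description precedes it below -/
import Mathlib

section
/- In the triangle configuration, the permutations σ_1,…,σ_k pairwise commute and each is an involution: σ_i∘σ_i = id for all i ∈ {1,…,k}, and σ_i∘σ_j = σ_j∘σ_i for all i,j ∈ {1,…,k}. -/
/-- A family of vectors is `3`-independent if any three members with pairwise
distinct indices are linearly independent. -/
def ThreeIndep {V : Type*} [AddCommGroup V] [Module ℝ V] {I : Type*} (w : I → V) : Prop :=
  ∀ i j l : I, i ≠ j → i ≠ l → j ≠ l → LinearIndependent ℝ ![w i, w j, w l]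

/-!
Eliminating `γ`, the relations read `β_i + δ_{ij} β_{σ_j i} = α_1 - ε_{ij} α_j`. Subtracting two
such relations gives a linear relation, with some coefficient `±1` or `±2`, among three vectors of
one of the `3`-independent families, unless indices collide. This forces `σ_j ∘ σ_j = id`, and for
`j ≠ 1` it forces `σ_j` to be fixed-point free and `δ_{ij} = 1`. Then
`β_{σ_j i} = α_1 - ε_{ij} α_j - β_i`, so `β` at `σ_l (σ_j i)` and at `σ_j (σ_l i)` differ from
`β_i` only by multiples of `α_j` and `α_l`, and `3`-independence forces the two indices to agree.
-/

lemma eq_or_eq_neg_of_eq_one_or_eq_neg_one {R : Type*} [Ring R] {a b : R}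
    (ha : a = 1 ∨ a = -1) (hb : b = 1 ∨ b = -1) : b = a ∨ b = -a := by
  rcases ha with rfl | rfl <;> rcases hb with rfl | rfl <;> simp

lemma ThreeIndep.eq_zero_of_smul_add_smul_add_smul_eq_zero {V ι : Type*} [AddCommGroup V]
    [Module ℝ V] {w : ι → V} (hw : ThreeIndep w) {i j l : ι} (hij : i ≠ j) (hil : i ≠ l)
    (hjl : j ≠ l) {a b c : ℝ} (h : a • w i + b • w j + c • w l = 0) : a = 0 :=
  Fintype.linearIndependent_iff.mp (hw i j l hij hil hjl) ![a, b, c]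
    (by simpa [Fin.sum_univ_three, add_assoc] using h) 0

namespace TriangleConfig

variable {V ι : Type*} [AddCommGroup V] [Module ℝ V] {o : ι} {α β γ : ι → V}
  {ε δ : ι → ι → ℝ} {σ : ι → Equiv.Perm ι}

lemma sigma_apply_ne_self (hR1 : ∀ i, γ i = α o - β i)
    (hR2 : ∀ i j, γ i = ε i j • α j + δ i j • β (σ j i)) (hI1 : ThreeIndep (Sum.elim α β))
    {j : ι} (hj : j ≠ o) (i : ι) : σ j i ≠ i := by
  intro hfix
  have hrel : (1 : ℝ) • α o + (-ε i j) • α j + (-(1 + δ i j)) • β i = 0 := by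
    have := hR2 i j
    rw [hfix] at this
    linear_combination (norm := module) this - hR1 i
  exact one_ne_zero <| hI1.eq_zero_of_smul_add_smul_add_smul_eq_zero
    (i := Sum.inl o) (j := Sum.inl j) (l := Sum.inr i) (by simpa using hj.symm) (by simp)
    (by simp) hrel

lemma sigma_sigma_apply_of_delta_eq_one (hR1 : ∀ i, γ i = α o - β i)
    (hR2 : ∀ i j, γ i = ε i j • α j + δ i j • β (σ j i)) (hI1 : ThreeIndep (Sum.elim α β))
    {i j : ι} (hδij : δ i j = 1) : σ j (σ j i) = i := by
  by_contra hne
  have hrel : (1 : ℝ) • β i + (-δ (σ j i) j) • β (σ j (σ j i))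
      + (ε i j - ε (σ j i) j) • α j = 0 := by
    have := hR2 i j
    rw [hδij] at this
    linear_combination (norm := module) hR1 i - this - hR1 (σ j i) + hR2 (σ j i) j
  exact one_ne_zero <| hI1.eq_zero_of_smul_add_smul_add_smul_eq_zero
    (i := Sum.inr i) (j := Sum.inr (σ j (σ j i))) (l := Sum.inl j)
    (by simpa using Ne.symm hne) (by simp) (by simp) hrel

lemma sigma_sigma_apply_of_delta_eq_neg_one (hε : ∀ i j, ε i j = 1 ∨ ε i j = -1)
    (hδ : ∀ i j, δ i j = 1 ∨ δ i j = -1) (hR1 : ∀ i, γ i = α o - β i)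
    (hR2 : ∀ i j, γ i = ε i j • α j + δ i j • β (σ j i)) (hI1 : ThreeIndep (Sum.elim α β))
    (hI2 : ThreeIndep (Sum.elim α γ)) {i j : ι} (hδij : δ i j = -1) : σ j (σ j i) = i := by
  by_contra hne
  have hne' : σ j i ≠ i := fun h ↦ hne (by rw [h, h])
  have hE := hR2 i j
  have hE' := hR2 (σ j i) j
  rw [hδij] at hE
  rcases hδ (σ j i) j with hδ' | hδ' <;> rw [hδ'] at hE'
  · have hrel : (1 : ℝ) • γ i + (1 : ℝ) • γ (σ j (σ j i))
        + (-(ε i j + ε (σ j i) j)) • α j = 0 := by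
      linear_combination (norm := module) hE - hR1 (σ j i) + hE' + hR1 (σ j (σ j i))
    exact one_ne_zero <| hI2.eq_zero_of_smul_add_smul_add_smul_eq_zero
      (i := Sum.inr i) (j := Sum.inr (σ j (σ j i))) (l := Sum.inl j)
      (by simpa using Ne.symm hne) (by simp) (by simp) hrel
  rcases eq_or_eq_neg_of_eq_one_or_eq_neg_one (hε i j) (hε (σ j i) j) with hε' | hε'
  · have hrel : (1 : ℝ) • β i + (1 : ℝ) • β (σ j (σ j i)) + (-2 : ℝ) • β (σ j i) = 0 := by
      rw [hε'] at hE'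
      linear_combination (norm := module) hR1 i - hE - hR1 (σ j i) + hE'
    exact one_ne_zero <| hI1.eq_zero_of_smul_add_smul_add_smul_eq_zero
      (i := Sum.inr i) (j := Sum.inr (σ j (σ j i))) (l := Sum.inr (σ j i))
      (by simpa using Ne.symm hne) (by simpa using Ne.symm hne')
      (by simpa using (σ j).injective.ne hne') hrel
  · have hrel : (1 : ℝ) • γ i + (-1 : ℝ) • γ (σ j (σ j i)) + (2 : ℝ) • α o = 0 := by
      rw [hε'] at hE'
      linear_combination (norm := module) hE - hR1 (σ j i) + hE' - hR1 (σ j (σ j i))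
    exact one_ne_zero <| hI2.eq_zero_of_smul_add_smul_add_smul_eq_zero
      (i := Sum.inr i) (j := Sum.inr (σ j (σ j i))) (l := Sum.inl o)
      (by simpa using Ne.symm hne) (by simp) (by simp) hrel

lemma sigma_sigma_apply (hε : ∀ i j, ε i j = 1 ∨ ε i j = -1)
    (hδ : ∀ i j, δ i j = 1 ∨ δ i j = -1) (hR1 : ∀ i, γ i = α o - β i)
    (hR2 : ∀ i j, γ i = ε i j • α j + δ i j • β (σ j i)) (hI1 : ThreeIndep (Sum.elim α β))
    (hI2 : ThreeIndep (Sum.elim α γ)) (j i : ι) : σ j (σ j i) = i :=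
  (hδ i j).elim (sigma_sigma_apply_of_delta_eq_one hR1 hR2 hI1)
    (sigma_sigma_apply_of_delta_eq_neg_one hε hδ hR1 hR2 hI1 hI2)

lemma delta_eq_one (hR1 : ∀ i, γ i = α o - β i)
    (hR2 : ∀ i j, γ i = ε i j • α j + δ i j • β (σ j i)) (hI1 : ThreeIndep (Sum.elim α β))
    {i j : ι} (hj : j ≠ o) (hinv : σ j (σ j i) = i) : δ i j = 1 := by
  have hrel : (δ i j - 1) • β (σ j i) + (1 - δ (σ j i) j) • β i
      + (ε i j - ε (σ j i) j) • α j = 0 := by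
    have := hR2 (σ j i) j
    rw [hinv] at this
    linear_combination (norm := module) hR1 i - hR2 i j - hR1 (σ j i) + this
  exact sub_eq_zero.mp <| hI1.eq_zero_of_smul_add_smul_add_smul_eq_zero
    (i := Sum.inr (σ j i)) (j := Sum.inr i) (l := Sum.inl j)
    (by simpa using sigma_apply_ne_self hR1 hR2 hI1 hj i) (by simp) (by simp) hrel

lemma beta_sigma_apply (hR1 : ∀ i, γ i = α o - β i)
    (hR2 : ∀ i j, γ i = ε i j • α j + δ i j • β (σ j i)) (hI1 : ThreeIndep (Sum.elim α β))
    {i j : ι} (hj : j ≠ o) (hinv : σ j (σ j i) = i) :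
    β (σ j i) = α o - ε i j • α j - β i := by
  have := hR2 i j
  rw [delta_eq_one hR1 hR2 hI1 hj hinv] at this
  linear_combination (norm := module) hR1 i - this

lemma sigma_apply_sigma_apply_ne_self_of_ne (hinv : ∀ j i, σ j (σ j i) = i) {i j l : ι}
    (hne : σ j (σ l i) ≠ σ l (σ j i)) : σ l (σ j i) ≠ i := fun h ↦ by
  have : σ l i = σ j i := (congrArg (σ l) h).symm.trans (hinv l _)
  exact hne (by rw [this, hinv, h])

lemma sigma_comm_apply_of_ne (hε : ∀ i j, ε i j = 1 ∨ ε i j = -1)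
    (hI1 : ThreeIndep (Sum.elim α β)) (hinv : ∀ j i, σ j (σ j i) = i)
    (hβ : ∀ j, j ≠ o → ∀ i, β (σ j i) = α o - ε i j • α j - β i)
    {j l : ι} (hj : j ≠ o) (hl : l ≠ o) (i : ι) : σ j (σ l i) = σ l (σ j i) := by
  by_contra hne
  have hmi := sigma_apply_sigma_apply_ne_self_of_ne hinv hne
  have hni := sigma_apply_sigma_apply_ne_self_of_ne hinv (Ne.symm hne)
  have hm : β (σ l (σ j i)) = β i + ε i j • α j - ε (σ j i) l • α l := by
    rw [hβ l hl, hβ j hj]; module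
  have hn : β (σ j (σ l i)) = β i + ε i l • α l - ε (σ l i) j • α j := by
    rw [hβ j hj, hβ l hl]; module
  rcases eq_or_eq_neg_of_eq_one_or_eq_neg_one (hε i l) (hε (σ j i) l) with hεl | hεl
  · rcases eq_or_eq_neg_of_eq_one_or_eq_neg_one (hε i j) (hε (σ l i) j) with hεj | hεj
    · have hrel : (1 : ℝ) • β (σ l (σ j i)) + (1 : ℝ) • β (σ j (σ l i)) + (-2 : ℝ) • β i = 0 := by
        rw [hεl] at hm
        rw [hεj] at hn
        linear_combination (norm := module) hm + hn
      exact one_ne_zero <| hI1.eq_zero_of_smul_add_smul_add_smul_eq_zero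
        (i := Sum.inr (σ l (σ j i))) (j := Sum.inr (σ j (σ l i))) (l := Sum.inr i)
        (by simpa using Ne.symm hne) (by simpa using hmi) (by simpa using hni) hrel
    · have hrel : (1 : ℝ) • β (σ l (σ j i)) + (-1 : ℝ) • β (σ j (σ l i))
          + (ε i l + ε (σ j i) l) • α l = 0 := by
        rw [hεj] at hn
        linear_combination (norm := module) hm - hn
      exact one_ne_zero <| hI1.eq_zero_of_smul_add_smul_add_smul_eq_zero
        (i := Sum.inr (σ l (σ j i))) (j := Sum.inr (σ j (σ l i))) (l := Sum.inl l)
        (by simpa using Ne.symm hne) (by simp) (by simp) hrel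
  · have hrel : (1 : ℝ) • β (σ l (σ j i)) + (-1 : ℝ) • β (σ j (σ l i))
        + (-(ε i j + ε (σ l i) j)) • α j = 0 := by
      rw [hεl] at hm
      linear_combination (norm := module) hm - hn
    exact one_ne_zero <| hI1.eq_zero_of_smul_add_smul_add_smul_eq_zero
      (i := Sum.inr (σ l (σ j i))) (j := Sum.inr (σ j (σ l i))) (l := Sum.inl j)
      (by simpa using Ne.symm hne) (by simp) (by simp) hrel

lemma sigma_comm_apply (hε : ∀ i j, ε i j = 1 ∨ ε i j = -1) (hσ1 : σ o = 1)
    (hI1 : ThreeIndep (Sum.elim α β)) (hinv : ∀ j i, σ j (σ j i) = i)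
    (hβ : ∀ j, j ≠ o → ∀ i, β (σ j i) = α o - ε i j • α j - β i) (j l i : ι) :
    σ j (σ l i) = σ l (σ j i) := by
  rcases eq_or_ne j o with rfl | hj
  · rw [hσ1]; rfl
  rcases eq_or_ne l o with rfl | hl
  · rw [hσ1]; rfl
  exact sigma_comm_apply_of_ne hε hI1 hinv hβ hj hl i

end TriangleConfig

theorem triangle_config_sigma_commuting_involutions_general
    {V : Type*} [AddCommGroup V] [Module ℝ V]
    (k : ℕ) (hk : 0 < k)
    (α β γ : Fin k → V)
    (ε δ : Fin k → Fin k → ℝ)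
    (hε : ∀ i j, ε i j = 1 ∨ ε i j = -1)
    (hδ : ∀ i j, δ i j = 1 ∨ δ i j = -1)
    (σ : Fin k → Equiv.Perm (Fin k))
    (hσ1 : σ ⟨0, hk⟩ = 1)
    (hR1 : ∀ i, γ i = α ⟨0, hk⟩ - β i)
    (hR2 : ∀ i j, γ i = ε i j • α j + δ i j • β (σ j i))
    (hI1 : ThreeIndep (Sum.elim α β))
    (hI2 : ThreeIndep (Sum.elim α γ)) :
    (∀ i : Fin k, σ i * σ i = 1) ∧
    (∀ i j : Fin k, σ i * σ j = σ j * σ i) := by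
  have hinv := TriangleConfig.sigma_sigma_apply hε hδ hR1 hR2 hI1 hI2
  have hβ := fun j hj i ↦ TriangleConfig.beta_sigma_apply hR1 hR2 hI1 hj (hinv j i)
  exact ⟨fun j ↦ Equiv.ext (hinv j),
    fun j l ↦ Equiv.ext (TriangleConfig.sigma_comm_apply hε hσ1 hI1 hinv hβ j l)⟩

/-- In the triangle configuration the permutations `σ_1, …, σ_k` are pairwise
commuting involutions. -/
theorem triangle_config_sigma_commuting_involutions
    {V : Type*} [AddCommGroup V] [Module ℝ V]
    (k : ℕ) (hk : 0 < k)
    (α β γ : Fin k → V)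
    (ε δ : Fin k → Fin k → ℝ)
    (hε : ∀ i j, ε i j = 1 ∨ ε i j = -1)
    (hδ : ∀ i j, δ i j = 1 ∨ δ i j = -1)
    (σ : Fin k → Equiv.Perm (Fin k))
    (hσ1 : σ ⟨0, hk⟩ = 1)
    (hR1 : ∀ i, γ i = α ⟨0, hk⟩ - β i)
    (hR2 : ∀ i j, γ i = ε i j • α j + δ i j • β (σ j i))
    (hI1 : ThreeIndep (Sum.elim α β))
    (hI2 : ThreeIndep (Sum.elim α γ))
    (hI3 : ThreeIndep (Sum.elim β γ)) :
    (∀ i : Fin k, σ i * σ i = 1) ∧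
    (∀ i j : Fin k, σ i * σ j = σ j * σ i) :=
  triangle_config_sigma_commuting_involutions_general k hk α β γ ε δ hε hδ σ hσ1 hR1 hR2 hI1 hI2
end

section
/- In the triangle configuration, necessarily k = 1, k = 2, or k = 4. (Equivalently: in the GKM graph of a positively curved orientable GKM₃-manifold, a triangle of vertices in which each pair of vertices is joined by k edges can only occur for k ∈ {1,2,4}.) -/
theorem ThreeIndep.coeffs_eq_zero {V I : Type*} [AddCommGroup V] [Module ℝ V] {w : I → V}
    (hw : ThreeIndep w) {i j l : I} (hij : i ≠ j) (hil : i ≠ l) (hjl : j ≠ l) {a b c : ℝ}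
    (h : a • w i + b • w j + c • w l = 0) : a = 0 ∧ b = 0 ∧ c = 0 := by
  have := Fintype.linearIndependent_iff.mp (hw i j l hij hil hjl) ![a, b, c]
    (by simpa [Fin.sum_univ_three] using h)
  exact ⟨this 0, this 1, this 2⟩

/-- The triangle configuration after substituting `γ i = α o - β i`, where `o` is the index
called `1` in the paper. -/
structure TriangleConfig (ι V : Type*) [AddCommGroup V] [Module ℝ V] where
  o : ι
  α : ι → V
  β : ι → V
  ε : ι → ι → ℝ
  δ : ι → ι → ℝ
  σ : ι → Equiv.Perm ι
  ε_sign : ∀ x j, ε x j = 1 ∨ ε x j = -1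
  δ_sign : ∀ x j, δ x j = 1 ∨ δ x j = -1
  rel : ∀ x j, α o - β x = ε x j • α j + δ x j • β (σ j x)
  indep : ThreeIndep (Sum.elim α β)

namespace TriangleConfig

variable {ι V : Type*} [AddCommGroup V] [Module ℝ V] (C : TriangleConfig ι V) {j : ι}

theorem ε_ne_zero (x j : ι) : C.ε x j ≠ 0 := by
  rcases C.ε_sign x j with h | h <;> norm_num [h]

theorem ααβ_coeffs_eq_zero {p q x : ι} (hpq : p ≠ q) {a b c : ℝ}
    (h : a • C.α p + b • C.α q + c • C.β x = 0) : a = 0 ∧ b = 0 ∧ c = 0 :=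
  C.indep.coeffs_eq_zero (Sum.inl_injective.ne hpq) Sum.inl_ne_inr Sum.inl_ne_inr h

theorem αββ_coeffs_eq_zero {p x y : ι} (hxy : x ≠ y) {a b c : ℝ}
    (h : a • C.α p + b • C.β x + c • C.β y = 0) : a = 0 ∧ b = 0 ∧ c = 0 :=
  C.indep.coeffs_eq_zero Sum.inl_ne_inr Sum.inl_ne_inr (Sum.inr_injective.ne hxy) h

theorem βββ_coeffs_eq_zero {x y z : ι} (hxy : x ≠ y) (hxz : x ≠ z) (hyz : y ≠ z) {a b c : ℝ}
    (h : a • C.β x + b • C.β y + c • C.β z = 0) : a = 0 ∧ b = 0 ∧ c = 0 :=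
  C.indep.coeffs_eq_zero (Sum.inr_injective.ne hxy) (Sum.inr_injective.ne hxz)
    (Sum.inr_injective.ne hyz) h

theorem ααα_coeff_eq_zero {j₁ j₂ : ι} (hj₁ : j₁ ≠ j) (hj₂ : j₂ ≠ j) {a b c : ℝ}
    (h : a • C.α j₁ + b • C.α j₂ + c • C.α j = 0) : c = 0 := by
  by_cases hj₁₂ : j₁ = j₂
  · subst hj₁₂
    exact (C.ααβ_coeffs_eq_zero (x := j) hj₁ (a := a + b) (b := c) (c := 0)
      (by linear_combination (norm := module) h)).2.1
  · exact (C.indep.coeffs_eq_zero (Sum.inl_injective.ne hj₁₂) (Sum.inl_injective.ne hj₁)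
      (Sum.inl_injective.ne hj₂) h).2.2

theorem σ_apply_ne (hj : j ≠ C.o) (x : ι) : C.σ j x ≠ x := by
  intro hx
  have h := C.rel x j
  rw [hx] at h
  have := C.ααβ_coeffs_eq_zero hj.symm (a := 1) (b := -C.ε x j) (c := -(1 + C.δ x j))
    (by linear_combination (norm := module) h)
  exact one_ne_zero this.1

theorem ε_σ_apply_eq_neg_and_β_add_β_σ_apply (hj : j ≠ C.o) {x : ι} (hx : C.σ j (C.σ j x) ≠ x) :
    C.ε (C.σ j x) j = -C.ε x j ∧ C.β x + C.β (C.σ j x) = C.α C.o - C.ε x j • C.α j := by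
  set y := C.σ j x
  set z := C.σ j y
  have E₁ := C.rel x j
  have E₂ := C.rel y j
  have hε : C.ε y j = -C.ε x j := by
    by_contra hne
    have hεy : C.ε y j = C.ε x j := by
      rcases C.ε_sign y j with h | h <;> rcases C.ε_sign x j with h' | h' <;> simp_all
    have := C.βββ_coeffs_eq_zero (C.σ_apply_ne hj x).symm hx.symm (C.σ_apply_ne hj y).symm
      (a := 1) (b := C.δ x j - 1) (c := -C.δ y j)
      (by rw [hεy] at E₂; linear_combination (norm := module) E₂ - E₁)
    exact one_ne_zero this.1
  have hδ : C.δ x j = 1 := by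
    refine (C.δ_sign x j).resolve_right fun hδ ↦ ?_
    have := C.αββ_coeffs_eq_zero hx.symm (p := C.o) (a := 2) (b := -1) (c := -C.δ y j)
      (by rw [hε] at E₂; rw [hδ] at E₁; linear_combination (norm := module) E₁ + E₂)
    exact two_ne_zero this.1
  rw [hδ] at E₁
  exact ⟨hε, by linear_combination (norm := module) -E₁⟩

/-- Otherwise two steps along `σ j` would move `β` by `2 ε α j`, contradicting the
independence of `α j`, `β x`, `β (σ j (σ j x))`. -/
theorem σ_involutive (hj : j ≠ C.o) : Function.Involutive (C.σ j) := by
  intro x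
  by_contra hx
  have hy : C.σ j (C.σ j (C.σ j x)) ≠ C.σ j x := fun h ↦ hx ((C.σ j).injective h)
  obtain ⟨hεy, hxy⟩ := C.ε_σ_apply_eq_neg_and_β_add_β_σ_apply hj hx
  obtain ⟨-, hyz⟩ := C.ε_σ_apply_eq_neg_and_β_add_β_σ_apply hj hy
  rw [hεy] at hyz
  have := C.αββ_coeffs_eq_zero (p := j) (Ne.symm hx) (a := 2 * C.ε x j) (b := 1) (c := -1)
    (by linear_combination (norm := module) hxy - hyz)
  exact mul_ne_zero two_ne_zero (C.ε_ne_zero x j) this.1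

theorem ε_σ_apply_and_δ_eq_one (hj : j ≠ C.o) (x : ι) :
    C.ε (C.σ j x) j = C.ε x j ∧ C.δ x j = 1 := by
  have E₂ := C.rel (C.σ j x) j
  rw [C.σ_involutive hj x] at E₂
  obtain ⟨hε, -, hδ⟩ := C.αββ_coeffs_eq_zero (p := j) (C.σ_apply_ne hj x).symm
    (a := C.ε x j - C.ε (C.σ j x) j) (b := 1 - C.δ (C.σ j x) j) (c := C.δ x j - 1)
    (by linear_combination (norm := module) E₂ - C.rel x j)
  constructor <;> linarith

theorem β_add_β_σ_apply (hj : j ≠ C.o) (x : ι) :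
    C.β x + C.β (C.σ j x) = C.α C.o - C.ε x j • C.α j := by
  have E := C.rel x j
  rw [(C.ε_σ_apply_and_δ_eq_one hj x).2] at E
  linear_combination (norm := module) -E

theorem σ_apply_ne_σ_apply {j' : ι} (hj : j ≠ C.o) (hj' : j' ≠ C.o) (hjj' : j ≠ j') (x : ι) :
    C.σ j x ≠ C.σ j' x := by
  intro h
  have h₁ := C.β_add_β_σ_apply hj x
  rw [h] at h₁
  have := C.ααβ_coeffs_eq_zero (x := x) hjj' (a := C.ε x j) (b := -C.ε x j') (c := 0)
    (by linear_combination (norm := module) h₁ - C.β_add_β_σ_apply hj' x)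
  exact C.ε_ne_zero x j this.1

theorem even_card [Fintype ι] (hj : j ≠ C.o) : Even (Fintype.card ι) := by
  by_contra hodd
  have hsq : C.σ j ^ 2 ^ 1 = 1 := by
    ext x
    simp [pow_two, C.σ_involutive hj x]
  obtain ⟨x, hx⟩ := Equiv.Perm.exists_fixed_point_of_prime (p := 2)
    (by rwa [← even_iff_two_dvd]) hsq
  exact C.σ_apply_ne hj x hx

section Finite

variable [Fintype ι] [DecidableEq ι]

open Finset

/-- `j ↦ σ j x` maps the `card ι - 1` indices `j ≠ o` injectively into the `card ι - 1`
indices `≠ x`. -/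
theorem exists_σ_apply_eq {x y : ι} (hxy : x ≠ y) : ∃ j ≠ C.o, C.σ j x = y := by
  have hsurj := surjOn_of_injOn_of_card_le (fun j ↦ C.σ j x)
    (s := univ.erase C.o) (t := univ.erase x)
    (fun j hj ↦ mem_erase.mpr ⟨C.σ_apply_ne (ne_of_mem_erase hj) x, mem_univ _⟩)
    (fun j hj j' hj' h ↦ by_contra fun hne ↦ C.σ_apply_ne_σ_apply
      (ne_of_mem_erase hj) (ne_of_mem_erase hj') hne x h)
    (by simp)
  obtain ⟨j, hj, hjy⟩ := hsurj (mem_erase.mpr ⟨hxy.symm, mem_univ y⟩)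
  exact ⟨j, ne_of_mem_erase hj, hjy⟩

/-- Pairing `i` with `i'` and `σ j i` with `σ j i'` by some `σ j₁`, `σ j₂` and comparing the four
pair sums of `β` leaves `2 ε i j • α j` as a combination of `α j₁` and `α j₂`. -/
theorem ε_ne_of_ne_of_ne_σ_apply (hj : j ≠ C.o) {i i' : ι} (hi : i' ≠ i) (hσi : i' ≠ C.σ j i) :
    C.ε i' j ≠ C.ε i j := by
  intro he
  obtain ⟨j₁, hj₁, h₁⟩ := C.exists_σ_apply_eq hi.symm
  obtain ⟨j₂, hj₂, h₂⟩ := C.exists_σ_apply_eq ((C.σ j).injective.ne hi.symm)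
  have hj₁j : j₁ ≠ j := by rintro rfl; exact hσi h₁.symm
  have hj₂j : j₂ ≠ j := by
    rintro rfl
    rw [C.σ_involutive hj] at h₂
    exact hσi (by rw [h₂, C.σ_involutive hj])
  have s₁ := C.β_add_β_σ_apply hj₁ i
  have s₂ := C.β_add_β_σ_apply hj₂ (C.σ j i)
  have s₃ := C.β_add_β_σ_apply hj i
  have s₄ := C.β_add_β_σ_apply hj i'
  rw [h₁] at s₁
  rw [h₂] at s₂
  rw [he] at s₄
  have := C.ααα_coeff_eq_zero hj₁j hj₂j (a := C.ε i j₁) (b := C.ε (C.σ j i) j₂)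
    (c := -2 * C.ε i j) (by linear_combination (norm := module) s₁ + s₂ - s₃ - s₄)
  exact C.ε_ne_zero i j (by linarith)

theorem card_le_four (hj : j ≠ C.o) : Fintype.card ι ≤ 4 := by
  have hfiber : ∀ e ∈ ({1, -1} : Finset ℝ), #{x | C.ε x j = e} ≤ 2 := by
    intro e _
    rcases eq_empty_or_nonempty {x | C.ε x j = e} with h | ⟨i, hi⟩
    · simp [h]
    · refine (card_le_card (t := {i, C.σ j i}) fun i' hi' ↦ ?_).trans card_le_two
      simp only [mem_filter, mem_univ, true_and] at hi hi'
      by_contra hne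
      simp only [mem_insert, mem_singleton, not_or] at hne
      exact C.ε_ne_of_ne_of_ne_σ_apply hj hne.1 hne.2 (hi'.trans hi.symm)
  calc Fintype.card ι
      ≤ 2 * #({1, -1} : Finset ℝ) :=
        card_le_mul_card_image_of_maps_to (by simpa using C.ε_sign · j) 2 hfiber
    _ ≤ 2 * 2 := Nat.mul_le_mul_left 2 card_le_two

theorem card_eq_one_two_or_four (C : TriangleConfig ι V) :
    Fintype.card ι = 1 ∨ Fintype.card ι = 2 ∨ Fintype.card ι = 4 := by
  by_cases h : ∃ j, j ≠ C.o
  · obtain ⟨j, hj⟩ := h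
    obtain ⟨r, hr⟩ := C.even_card hj
    have := C.card_le_four hj
    have : 0 < Fintype.card ι := Fintype.card_pos_iff.mpr ⟨C.o⟩
    omega
  · push Not at h
    exact Or.inl (Fintype.card_eq_one_iff.mpr ⟨C.o, h⟩)

end Finite

end TriangleConfig

theorem triangle_config_k_eq_one_two_or_four_general
    {V : Type*} [AddCommGroup V] [Module ℝ V]
    (k : ℕ) (hk : 0 < k)
    (α β γ : Fin k → V)
    (ε δ : Fin k → Fin k → ℝ)
    (hε : ∀ i j, ε i j = 1 ∨ ε i j = -1)
    (hδ : ∀ i j, δ i j = 1 ∨ δ i j = -1)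
    (σ : Fin k → Equiv.Perm (Fin k))
    (hR1 : ∀ i, γ i = α ⟨0, hk⟩ - β i)
    (hR2 : ∀ i j, γ i = ε i j • α j + δ i j • β (σ j i))
    (hI1 : ThreeIndep (Sum.elim α β)) :
    k = 1 ∨ k = 2 ∨ k = 4 := by
  let C : TriangleConfig (Fin k) V :=
    { o := ⟨0, hk⟩, α, β, ε, δ, σ, ε_sign := hε, δ_sign := hδ
      rel := fun x j ↦ (hR1 x).symm.trans (hR2 x j), indep := hI1 }
  simpa using C.card_eq_one_two_or_four

/-- In the triangle configuration necessarily `k = 1`, `k = 2` or `k = 4`: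
in the GKM graph of a positively curved orientable GKM₃-manifold, a triangle of
vertices in which each pair of vertices is joined by `k` edges can occur only for
`k ∈ {1, 2, 4}`. -/
theorem triangle_config_k_eq_one_two_or_four
    {V : Type*} [AddCommGroup V] [Module ℝ V]
    (k : ℕ) (hk : 0 < k)
    (α β γ : Fin k → V)
    (ε δ : Fin k → Fin k → ℝ)
    (hε : ∀ i j, ε i j = 1 ∨ ε i j = -1)
    (hδ : ∀ i j, δ i j = 1 ∨ δ i j = -1)
    (σ : Fin k → Equiv.Perm (Fin k))
    (hσ1 : σ ⟨0, hk⟩ = 1)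
    (hR1 : ∀ i, γ i = α ⟨0, hk⟩ - β i)
    (hR2 : ∀ i j, γ i = ε i j • α j + δ i j • β (σ j i))
    (hI1 : ThreeIndep (Sum.elim α β))
    (hI2 : ThreeIndep (Sum.elim α γ))
    (hI3 : ThreeIndep (Sum.elim β γ)) :
    k = 1 ∨ k = 2 ∨ k = 4 :=
  triangle_config_k_eq_one_two_or_four_general k hk α β γ ε δ hε hδ σ hR1 hR2 hI1
end
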